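/- Let N ≥ 1, let U₁, …, U_N be 2×2 complex unitary matrices, let w₁, …, w_N be nonnegative reals summing to 1, and let x₁, x₂, x₃, x₄ be nonnegative reals summing to 1. Suppose that for every 2×2 complex matrix ρ, Σₖ wₖ Uₖ ρ Uₖ† = x₁ ρ + x₂ XρX + x₃ YρY + x₄ ZρZ; i.e., the two mixtures realize the same unital qubit channel. Then the Shannon entropy satisfies −Σⱼ xⱼ log₂ xⱼ ≤ −Σₖ wₖ log₂ wₖ: the Pauli realization of a unital qubit channel requires the least amount of entropy among all its unitary realizations, because the Pauli weight vector (xⱼ) majorizes the weight vector (wₖ). -/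

import Mathlib

open Matrix

noncomputable section

/-- The Pauli matrix X. -/
def PX : Matrix (Fin 2) (Fin 2) ℂ := !![0, 1; 1, 0]
/-- The Pauli matrix Y. -/
def PY : Matrix (Fin 2) (Fin 2) ℂ := !![0, -Complex.I; Complex.I, 0]
/-- The Pauli matrix Z. -/
def PZ : Matrix (Fin 2) (Fin 2) ℂ := !![1, 0; 0, -1]

/-- `−p·log₂ p`, one term of the Shannon entropy (equals `0` at `p = 0`). -/
def nmlb (p : ℝ) : ℝ := -(p * Real.logb 2 p)


lemma nmlb_zero : nmlb 0 = 0 := by simp [nmlb]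

lemma concaveOn_nmlb : ConcaveOn ℝ (Set.Ici 0) nmlb := by
  have h := Real.concaveOn_negMulLog.smul (c := (Real.log 2)⁻¹)
    (inv_nonneg.mpr (Real.log_nonneg one_le_two))
  have hf : nmlb = fun x => (Real.log 2)⁻¹ • x.negMulLog := by
    funext p
    simp [nmlb, Real.negMulLog, Real.logb, smul_eq_mul]
    ring
  rw [hf]
  exact h

lemma jensen_sub (B X : Fin 4 → ℝ) (hB : ∀ j, 0 ≤ B j) (hX : ∀ j, 0 ≤ X j)
    (hs : ∑ j, B j ≤ 1) :
    ∑ j, B j * nmlb (X j) ≤ nmlb (∑ j, B j * X j) := by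
  have hc := concaveOn_nmlb
  set w' : Fin 5 → ℝ := Fin.snoc B (1 - ∑ j, B j) with hw'
  set p' : Fin 5 → ℝ := Fin.snoc X 0 with hp'
  have hl1 : Fin.snoc (α := fun _ => ℝ) B (1 - ∑ j, B j) 4 = 1 - ∑ j, B j := Fin.snoc_last _ _
  have hl2 : Fin.snoc (α := fun _ => ℝ) X 0 4 = 0 := Fin.snoc_last _ _
  have h := hc.le_map_sum (t := Finset.univ) (w := w') (p := p')
    (fun i _ => by
      refine Fin.lastCases ?_ ?_ i
      · simp only [hw', Fin.snoc_last]; linarith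
      · intro j; simp only [hw', Fin.snoc_castSucc]; exact hB j)
    (by
      rw [Fin.sum_univ_castSucc]
      simp [hw', Fin.snoc_castSucc, hl1])
    (fun i _ => by
      refine Fin.lastCases ?_ ?_ i
      · simp [hp', Fin.snoc_last, hl2]
      · intro j; simp only [hp', Fin.snoc_castSucc]; exact hX j)
  rw [Fin.sum_univ_castSucc, Fin.sum_univ_castSucc (f := fun i => w' i • p' i)] at h
  simpa [hw', hp', Fin.snoc_castSucc, nmlb_zero, smul_eq_mul, hl1, hl2] using h

lemma rowsum_le_one {N : ℕ} (V : Fin N → Fin 4 → ℂ) (e : Fin 4 → ℝ)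
    (he : ∀ i, e i ≤ 1)
    (horth : ∀ i j : Fin 4, ∑ k, (starRingEnd ℂ) (V k i) * V k j
      = if i = j then (e i : ℂ) else 0)
    (k : Fin N) : ∑ j, Complex.normSq (V k j) ≤ 1 := by
  set r : ℝ := ∑ j, Complex.normSq (V k j) with hr
  have hrnn : 0 ≤ r := Finset.sum_nonneg fun j _ => Complex.normSq_nonneg _
  set P : Fin N → ℂ := fun l => ∑ j, V k j * (starRingEnd ℂ) (V l j) with hP
  have hPkk : P k = (r : ℂ) := by
    rw [hP, hr]
    push_cast
    exact Finset.sum_congr rfl fun j _ => (Complex.mul_conj _)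
  have key : ∑ l, (Complex.normSq (P l) : ℂ) = ∑ i, (e i : ℂ) * (Complex.normSq (V k i) : ℂ) := by
    calc ∑ l, (Complex.normSq (P l) : ℂ)
        = ∑ l, (∑ i, V k i * (starRingEnd ℂ) (V l i)) * (∑ j, (starRingEnd ℂ) (V k j) * V l j) := by
          refine Finset.sum_congr rfl fun l _ => ?_
          rw [← Complex.mul_conj, hP]
          simp only [map_sum, _root_.map_mul, Complex.conj_conj]
      _ = ∑ i, ∑ j, (V k i * (starRingEnd ℂ) (V k j)) * ∑ l, (starRingEnd ℂ) (V l i) * V l j := by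
          simp only [Fin.sum_univ_four, add_mul, mul_add, Finset.mul_sum]
          simp only [← Finset.sum_add_distrib]
          refine Finset.sum_congr rfl fun l _ => ?_
          ring
      _ = ∑ i, ∑ j, (V k i * (starRingEnd ℂ) (V k j)) * (if i = j then (e i : ℂ) else 0) := by
          simp only [horth]
      _ = ∑ i, (e i : ℂ) * (Complex.normSq (V k i) : ℂ) := by
          refine Finset.sum_congr rfl fun i _ => ?_
          simp only [mul_ite, mul_zero, Finset.sum_ite_eq, Finset.mem_univ, if_true]
          rw [Complex.mul_conj]
          ring
  have keyR : ∑ l, Complex.normSq (P l) = ∑ i, e i * Complex.normSq (V k i) := by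
    exact_mod_cast key
  have h1 : r ^ 2 ≤ ∑ l, Complex.normSq (P l) := by
    have h := Finset.single_le_sum (f := fun l => Complex.normSq (P l))
      (fun l _ => Complex.normSq_nonneg _) (Finset.mem_univ k)
    rw [hPkk] at h
    simpa [Complex.normSq_ofReal, sq] using h
  have h2 : ∑ i, e i * Complex.normSq (V k i) ≤ r := by
    rw [hr]
    refine Finset.sum_le_sum fun i _ => ?_
    have := Complex.normSq_nonneg (V k i)
    nlinarith [he i]
  nlinarith

def vvec (M : Matrix (Fin 2) (Fin 2) ℂ) : Fin 4 → ℂ :=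
  ![(M 0 0 + M 1 1)/2, (M 0 1 + M 1 0)/2, Complex.I * (M 0 1 - M 1 0)/2, (M 0 0 - M 1 1)/2]

def Cmat : Fin 4 → Matrix (Fin 2) (Fin 2) ℂ :=
  ![!![1/2, 0; 0, 1/2], !![0, 1/2; 1/2, 0], !![0, Complex.I/2; -(Complex.I/2), 0],
    !![1/2, 0; 0, -(1/2)]]

lemma vvec_eq (M : Matrix (Fin 2) (Fin 2) ℂ) (i : Fin 4) :
    vvec M i = ∑ p, ∑ q, Cmat i p q * M p q := by
  fin_cases i <;> simp [vvec, Cmat, Fin.sum_univ_two] <;> ring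

lemma vvec_normSq (M : Matrix (Fin 2) (Fin 2) ℂ) (h : star M * M = 1) :
    ∑ j, Complex.normSq (vvec M j) = 1 := by
  have h00 := congrFun (congrFun h 0) 0
  have h11 := congrFun (congrFun h 1) 1
  simp [Matrix.mul_apply, Fin.sum_univ_two, Matrix.star_apply, Matrix.one_apply] at h00 h11
  have key : ((∑ j, Complex.normSq (vvec M j) : ℝ) : ℂ) = 1 := by
    push_cast
    simp only [← Complex.mul_conj, Fin.sum_univ_four]
    simp only [vvec]
    simp only [Matrix.cons_val_zero, Matrix.cons_val_one, Matrix.head_cons,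
      Matrix.cons_val_two, Matrix.cons_val_three, Matrix.tail_cons]
    simp only [map_div₀, map_add, map_sub, _root_.map_mul, Complex.conj_I, map_ofNat]
    linear_combination (h00 + h11) / 2 + Complex.I_sq *
      ((- (M 0 1 * (starRingEnd ℂ) (M 0 1)) + M 0 1 * (starRingEnd ℂ) (M 1 0)
        + M 1 0 * (starRingEnd ℂ) (M 0 1) - M 1 0 * (starRingEnd ℂ) (M 1 0)) / 4)
  exact_mod_cast key

lemma conj_std (M : Matrix (Fin 2) (Fin 2) ℂ) (i j p q : Fin 2) :
    (M * Matrix.single i j (1:ℂ) * Mᴴ) p q = M p i * (starRingEnd ℂ) (M q j) := by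
  fin_cases i <;> fin_cases j <;> fin_cases p <;> fin_cases q <;>
    simp [Matrix.mul_apply, Matrix.single, Fin.sum_univ_two,
      Matrix.conjTranspose_apply, Matrix.of_apply]

lemma gram_swap {N : ℕ} (g : Fin N → ℝ) (A : Fin N → Matrix (Fin 2) (Fin 2) ℂ)
    (α β : Matrix (Fin 2) (Fin 2) ℂ) :
    ∑ k, (g k : ℂ) * ((∑ p, ∑ q, α p q * A k p q)
        * (starRingEnd ℂ) (∑ r, ∑ s, β r s * A k r s))
      = ∑ p, ∑ q, ∑ r, ∑ s, α p q * (starRingEnd ℂ) (β r s)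
          * ∑ k, (g k : ℂ) * (A k p q * (starRingEnd ℂ) (A k r s)) := by
  simp only [Fin.sum_univ_two, map_add, _root_.map_mul, Finset.mul_sum]
  simp only [← Finset.sum_add_distrib]
  exact Finset.sum_congr rfl fun k _ => by ring

def Tmat (x₁ x₂ x₃ x₄ : ℝ) : Fin 2 → Fin 2 → Matrix (Fin 2) (Fin 2) ℂ :=
  ![![!![(x₁:ℂ)+x₄, 0; 0, (x₂:ℂ)+x₃], !![0, (x₁:ℂ)-x₄; (x₂:ℂ)-x₃, 0]],
    ![!![0, (x₂:ℂ)-x₃; (x₁:ℂ)-x₄, 0], !![(x₂:ℂ)+x₃, 0; 0, (x₁:ℂ)+x₄]]]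


lemma std_explicit (i j : Fin 2) : Matrix.single i j (1:ℂ)
    = !![if i = 0 ∧ j = 0 then 1 else 0, if i = 0 ∧ j = 1 then 1 else 0;
         if i = 1 ∧ j = 0 then 1 else 0, if i = 1 ∧ j = 1 then 1 else 0] := by
  fin_cases i <;> fin_cases j <;> ext p q <;> fin_cases p <;> fin_cases q <;>
    simp [Matrix.single]

lemma pauli_entry (x₁ x₂ x₃ x₄ : ℝ) (i j p q : Fin 2) :
    (x₁ • Matrix.single i j (1:ℂ) + x₂ • (PX * Matrix.single i j (1:ℂ) * PX)
      + x₃ • (PY * Matrix.single i j (1:ℂ) * PY) + x₄ • (PZ * Matrix.single i j (1:ℂ) * PZ)) p q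
    = Tmat x₁ x₂ x₃ x₄ i j p q := by
  rw [std_explicit]
  fin_cases i <;> fin_cases j <;> fin_cases p <;> fin_cases q <;>
    simp [PX, PY, PZ, Tmat, Matrix.mul_apply, Fin.sum_univ_two, Complex.real_smul] <;>
    ring

/-- If a mixture of unitary conjugations `Σₖ wₖ Uₖ ρ Uₖ†` realizes the same unital qubit
channel as the Pauli mixture `x₁ρ + x₂XρX + x₃YρY + x₄ZρZ`, then the Shannon entropy of
the Pauli weights `(x₁, x₂, x₃, x₄)` is at most that of `(w₁, …, w_N)`: the Pauli
realization of a unital qubit channel requires the least entropy. -/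
theorem pauli_realization_least_entropy (N : ℕ) (hN : 1 ≤ N)
    (U : Fin N → Matrix (Fin 2) (Fin 2) ℂ)
    (hU : ∀ k, U k ∈ Matrix.unitaryGroup (Fin 2) ℂ)
    (w : Fin N → ℝ) (hw : ∀ k, 0 ≤ w k) (hwsum : ∑ k, w k = 1)
    (x₁ x₂ x₃ x₄ : ℝ) (hx1 : 0 ≤ x₁) (hx2 : 0 ≤ x₂) (hx3 : 0 ≤ x₃) (hx4 : 0 ≤ x₄)
    (hxsum : x₁ + x₂ + x₃ + x₄ = 1)
    (hchannel : ∀ ρ : Matrix (Fin 2) (Fin 2) ℂ,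
      (∑ k, w k • (U k * ρ * (U k)ᴴ))
        = x₁ • ρ + x₂ • (PX * ρ * PX) + x₃ • (PY * ρ * PY) + x₄ • (PZ * ρ * PZ)) :
    nmlb x₁ + nmlb x₂ + nmlb x₃ + nmlb x₄ ≤ ∑ k, nmlb (w k) := by
  classical
  set Xv : Fin 4 → ℝ := ![x₁, x₂, x₃, x₄] with hXv
  have hXnn : ∀ j, 0 ≤ Xv j := by
    intro j; fin_cases j <;> simpa [hXv]
  have hUu : ∀ k, star (U k) * U k = 1 := fun k => (Unitary.mem_iff.mp (hU k)).1
  have hv1 : ∀ k, ∑ j, Complex.normSq (vvec (U k) j) = 1 := fun k => vvec_normSq _ (hUu k)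
  -- Choi matrix equations
  have hC : ∀ p i q j : Fin 2, ∑ k, (w k : ℂ) * (U k p i * (starRingEnd ℂ) (U k q j))
      = Tmat x₁ x₂ x₃ x₄ i j p q := by
    intro p i q j
    calc ∑ k, (w k : ℂ) * (U k p i * (starRingEnd ℂ) (U k q j))
        = (∑ k, w k • (U k * Matrix.single i j (1:ℂ) * (U k)ᴴ)) p q := by
          rw [Matrix.sum_apply]
          refine Finset.sum_congr rfl fun k _ => ?_
          rw [Matrix.smul_apply, conj_std, Complex.real_smul]
      _ = (x₁ • Matrix.single i j (1:ℂ) + x₂ • (PX * Matrix.single i j (1:ℂ) * PX)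
            + x₃ • (PY * Matrix.single i j (1:ℂ) * PY)
            + x₄ • (PZ * Matrix.single i j (1:ℂ) * PZ)) p q := by rw [hchannel]
      _ = Tmat x₁ x₂ x₃ x₄ i j p q := pauli_entry x₁ x₂ x₃ x₄ i j p q
  -- Gram relations
  have hGram : ∀ i j : Fin 4, ∑ k, (w k : ℂ) * (vvec (U k) i * (starRingEnd ℂ) (vvec (U k) j))
      = if i = j then (Xv i : ℂ) else 0 := by
    intro i j
    calc ∑ k, (w k : ℂ) * (vvec (U k) i * (starRingEnd ℂ) (vvec (U k) j))
        = ∑ k, (w k : ℂ) * ((∑ p, ∑ q, Cmat i p q * U k p q)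
            * (starRingEnd ℂ) (∑ r, ∑ s, Cmat j r s * U k r s)) := by
          simp_rw [vvec_eq]
      _ = ∑ p, ∑ q, ∑ r, ∑ s, Cmat i p q * (starRingEnd ℂ) (Cmat j r s)
            * ∑ k, (w k : ℂ) * (U k p q * (starRingEnd ℂ) (U k r s)) := gram_swap w U _ _
      _ = ∑ p, ∑ q, ∑ r, ∑ s, Cmat i p q * (starRingEnd ℂ) (Cmat j r s)
            * Tmat x₁ x₂ x₃ x₄ q s p r := by simp_rw [hC]
      _ = if i = j then (Xv i : ℂ) else 0 := by
          fin_cases i <;> fin_cases j <;>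
            simp [Cmat, Tmat, hXv, Fin.sum_univ_two, map_div₀, Complex.conj_I, map_ofNat, _root_.map_one, _root_.map_neg] <;>
            (first
              | ring1
              | (try ring_nf; simp [Complex.I_sq]; try ring))
    -- diagonal: real form
  have hdiag : ∀ j : Fin 4, ∑ k, w k * Complex.normSq (vvec (U k) j) = Xv j := by
    intro j
    have h := hGram j j
    rw [if_pos rfl] at h
    have h2 : ((∑ k, w k * Complex.normSq (vvec (U k) j) : ℝ) : ℂ) = ((Xv j : ℝ) : ℂ) := by
      push_cast
      rw [← h]
      refine Finset.sum_congr rfl fun k _ => ?_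
      rw [Complex.mul_conj]
    exact_mod_cast h2
  -- the isometry columns
  set cc : Fin 4 → ℂ := fun j => if 0 < Xv j then ((Real.sqrt (Xv j))⁻¹ : ℝ) else 0 with hcc
  set V : Fin N → Fin 4 → ℂ := fun k j => (Real.sqrt (w k) : ℂ) * vvec (U k) j * cc j with hV
  set e : Fin 4 → ℝ := fun j => if 0 < Xv j then 1 else 0 with he'
  have hccconj : ∀ j, (starRingEnd ℂ) (cc j) = cc j := by
    intro j
    rw [hcc]
    by_cases hj : 0 < Xv j <;> simp [hj, Complex.conj_ofReal]
  have horth : ∀ i j : Fin 4, ∑ k, (starRingEnd ℂ) (V k i) * V k j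
      = if i = j then (e i : ℂ) else 0 := by
    intro i j
    have hG := hGram i j
    calc ∑ k, (starRingEnd ℂ) (V k i) * V k j
        = cc i * cc j * ∑ k, (starRingEnd ℂ) ((w k : ℂ) * (vvec (U k) i
            * (starRingEnd ℂ) (vvec (U k) j))) := by
          rw [Finset.mul_sum]
          refine Finset.sum_congr rfl fun k _ => ?_
          rw [hV]
          simp only [_root_.map_mul, Complex.conj_ofReal, hccconj, Complex.conj_conj]
          have hsq : (Real.sqrt (w k) : ℂ) * (Real.sqrt (w k) : ℂ) = (w k : ℂ) := by
            rw [← Complex.ofReal_mul, Real.mul_self_sqrt (hw k)]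
          linear_combination (cc i * cc j * (starRingEnd ℂ) (vvec (U k) i) * vvec (U k) j) * hsq
      _ = cc i * cc j * (starRingEnd ℂ) (if i = j then (Xv i : ℂ) else 0) := by
          rw [← map_sum, hG]
      _ = if i = j then (e i : ℂ) else 0 := by
          by_cases hij : i = j
          · subst hij
            rw [if_pos rfl, if_pos rfl, Complex.conj_ofReal]
            by_cases hpos : 0 < Xv i
            · rw [hcc, he']
              simp only [if_pos hpos]
              have hre : ((Real.sqrt (Xv i))⁻¹ * (Real.sqrt (Xv i))⁻¹ * Xv i : ℝ) = 1 := by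
                rw [← mul_inv, Real.mul_self_sqrt hpos.le]
                field_simp
              push_cast
              exact_mod_cast congrArg (Complex.ofReal) hre
            · rw [hcc, he']
              simp [hpos]
          · simp [hij]
  have hrow : ∀ k, ∑ j, Complex.normSq (V k j) ≤ 1 := by
    intro k
    refine rowsum_le_one V e (fun i => ?_) horth k
    rw [he']
    by_cases hi : 0 < Xv i <;> simp [hi]
  -- the stochastic-type matrix
  set B : Fin N → Fin 4 → ℝ :=
    fun k j => if 0 < Xv j then w k * Complex.normSq (vvec (U k) j) / Xv j else 0 with hB
  have hBnn : ∀ k j, 0 ≤ B k j := by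
    intro k j
    rw [hB]
    by_cases hj : 0 < Xv j
    · simp only [if_pos hj]
      exact div_nonneg (mul_nonneg (hw k) (Complex.normSq_nonneg _)) hj.le
    · simp [hj]
  have hBV : ∀ k j, B k j = Complex.normSq (V k j) := by
    intro k j
    rw [hB, hV]
    simp only [Complex.normSq_mul]
    by_cases hj : 0 < Xv j
    · rw [hcc]
      simp only [if_pos hj, Complex.normSq_ofReal]
      rw [Real.mul_self_sqrt (hw k), ← mul_inv, Real.mul_self_sqrt hj.le, div_eq_mul_inv]
    · rw [hcc]
      simp [hj]
  have hrowB : ∀ k, ∑ j, B k j ≤ 1 := by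
    intro k
    calc ∑ j, B k j = ∑ j, Complex.normSq (V k j) :=
          Finset.sum_congr rfl fun j _ => hBV k j
      _ ≤ 1 := hrow k
  have hcol : ∀ j, 0 < Xv j → ∑ k, B k j = 1 := by
    intro j hj
    have : ∑ k, B k j = (∑ k, w k * Complex.normSq (vvec (U k) j)) / Xv j := by
      rw [Finset.sum_div]
      exact Finset.sum_congr rfl fun k _ => by rw [hB]; simp [hj]
    rw [this, hdiag j, div_self (ne_of_gt hj)]
  have hmix : ∀ k, ∑ j, B k j * Xv j = w k := by
    intro k
    calc ∑ j, B k j * Xv j = ∑ j, w k * Complex.normSq (vvec (U k) j) := by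
          refine Finset.sum_congr rfl fun j _ => ?_
          by_cases hj : 0 < Xv j
          · rw [hB]
            simp only [if_pos hj]
            exact div_mul_cancel₀ _ (ne_of_gt hj)
          · have hXj : Xv j = 0 := le_antisymm (not_lt.mp hj) (hXnn j)
            have hsum := hdiag j
            rw [hXj] at hsum
            have h0 : w k * Complex.normSq (vvec (U k) j) = 0 :=
              (Finset.sum_eq_zero_iff_of_nonneg
                (fun l _ => mul_nonneg (hw l) (Complex.normSq_nonneg _))).mp hsum k
                (Finset.mem_univ k)
            rw [hB]
            simp only [if_neg hj]
            rw [zero_mul]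
            exact h0.symm
      _ = w k * ∑ j, Complex.normSq (vvec (U k) j) := by rw [Finset.mul_sum]
      _ = w k := by rw [hv1 k, mul_one]
  -- entropy chain
  have main : ∑ j, nmlb (Xv j) ≤ ∑ k, nmlb (w k) := by
    calc ∑ j, nmlb (Xv j) = ∑ j, (∑ k, B k j) * nmlb (Xv j) := by
          refine Finset.sum_congr rfl fun j _ => ?_
          by_cases hj : 0 < Xv j
          · rw [hcol j hj, one_mul]
          · have hXj : Xv j = 0 := le_antisymm (not_lt.mp hj) (hXnn j)
            simp [hXj, nmlb_zero]
      _ = ∑ k, ∑ j, B k j * nmlb (Xv j) := by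
          simp_rw [Finset.sum_mul]
          exact Finset.sum_comm
      _ ≤ ∑ k, nmlb (∑ j, B k j * Xv j) :=
          Finset.sum_le_sum fun k _ => jensen_sub (B k) Xv (hBnn k) hXnn (hrowB k)
      _ = ∑ k, nmlb (w k) := Finset.sum_congr rfl fun k _ => by rw [hmix k]
  have hL : nmlb x₁ + nmlb x₂ + nmlb x₃ + nmlb x₄ = ∑ j, nmlb (Xv j) := by
    rw [hXv]
    simp [Fin.sum_univ_four]
  rw [hL]
  exact main

end
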